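/- arXiv:1907.02521 — 2 statements merged into one kernel-verified Lean document; each statement's English description precedes it below -/
import Mathlib

section
/- The robustness of entanglement of the maximally entangled state on C^d ⊗ C^d with respect to separable states satisfying the Choi marginal condition is exactly d − 1; equivalently, if Φ⁺ + s σ = (1+s) σ' with σ, σ' separable density matrices, then s ≥ d − 1, and s = d − 1 is achievable. -/
open scoped Kronecker
open Matrix

/-- The outer product `|ψ⟩⟨ψ|`. -/
noncomputable def outer {A : Type*} (ψ : A → ℂ) : Matrix A A ℂ :=
  Matrix.vecMulVec ψ (star ψ)

/-- Partial trace over the second tensor factor. -/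
noncomputable def ptraceB {A B : Type*} [Fintype B] (ρ : Matrix (A × B) (A × B) ℂ) :
    Matrix A A ℂ :=
  Matrix.of fun i j => ∑ k, ρ (i, k) (j, k)

/-- A bipartite matrix is separable if it is a convex combination of pure product states. -/
def SepState {A B : Type*} [Fintype A] [Fintype B]
    (ρ : Matrix (A × B) (A × B) ℂ) : Prop :=
  ∃ (n : ℕ) (p : Fin n → ℝ) (ψ : Fin n → A → ℂ) (φ : Fin n → B → ℂ),
    (∀ i, 0 ≤ p i) ∧ (∑ i, p i = 1) ∧
    (∀ i, star (ψ i) ⬝ᵥ ψ i = 1) ∧ (∀ i, star (φ i) ⬝ᵥ φ i = 1) ∧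
    ρ = ∑ i, (p i : ℂ) • (outer (ψ i) ⊗ₖ outer (φ i))

/-- The maximally entangled state `Φ⁺ = (1/d) ∑_{i,j} |ii⟩⟨jj|`. -/
noncomputable def maxEnt (d : ℕ) : Matrix (Fin d × Fin d) (Fin d × Fin d) ℂ :=
  Matrix.of fun p q => if p.1 = p.2 ∧ q.1 = q.2 then (d : ℂ)⁻¹ else 0

/-!
Lower bound: the linear functional `M ↦ ∑ i j, M (i, i) (j, j) = d ⟨Φ⁺| M |Φ⁺⟩` equals `d` on
`Φ⁺`, and on a pure product state `ψ ⊗ φ` it equals `|∑ i, ψ i φ i|²`, which lies in `[0, 1]` by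
Cauchy–Schwarz; so it takes values in `[0, 1]` on separable states. Applied to
`Φ⁺ + s σ = (1 + s) σ'` it gives `d ≤ d + s x = (1 + s) y ≤ 1 + s`.

Achievability: let `v_χ i = χ (eᵢ) / √d` for the characters `χ` of `(ZMod 3)ᵈ`. By orthogonality
of characters, the average of `|v_χ⟩⟨v_χ| ⊗ |v̄_χ⟩⟨v̄_χ|` keeps exactly the entries
`⟨ab| · |ce⟩` with `eₐ + eₑ = e_b + e_c`, i.e. `a = b, c = e` or `a = c, b = e`. This separable
state `σ'` is `(Φ⁺ + (d - 1) σ) / d`, where `σ` is the uniform mixture of the basis states `|ab⟩`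
with `a ≠ b`, and both `σ` and `σ'` have maximally mixed marginal.
-/

noncomputable def maxEntOverlap (A : Type*) [Fintype A] :
    Matrix (A × A) (A × A) ℂ →ₗ[ℂ] ℂ where
  toFun M := ∑ i, ∑ j, M (i, i) (j, j)
  map_add' M N := by simp only [Matrix.add_apply, Finset.sum_add_distrib]
  map_smul' c M := by
    simp only [Matrix.smul_apply, smul_eq_mul, Finset.mul_sum, RingHom.id_apply]

lemma maxEntOverlap_maxEnt (d : ℕ) : maxEntOverlap (Fin d) (maxEnt d) = d := by
  rcases eq_or_ne d 0 with rfl | hd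
  · simp [maxEntOverlap]
  · simp [maxEntOverlap, maxEnt, hd]

lemma maxEntOverlap_kronecker_outer {A : Type*} [Fintype A] (ψ φ : A → ℂ) :
    maxEntOverlap A (outer ψ ⊗ₖ outer φ) = Complex.normSq (ψ ⬝ᵥ φ) := by
  rw [Complex.normSq_eq_conj_mul_self]
  simp only [maxEntOverlap, LinearMap.coe_mk, AddHom.coe_mk, kronecker_apply, outer,
    vecMulVec_apply, dotProduct, map_sum, Finset.sum_mul_sum, Pi.star_apply, map_mul,
    RCLike.star_def]
  rw [Finset.sum_comm]
  exact Finset.sum_congr rfl fun i _ => Finset.sum_congr rfl fun j _ => by ring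

lemma norm_toLp_sq {A : Type*} [Fintype A] (v : A → ℂ) :
    ‖WithLp.toLp 2 v‖ ^ 2 = (star v ⬝ᵥ v).re := by
  rw [← inner_self_eq_norm_sq (𝕜 := ℂ), EuclideanSpace.inner_toLp_toLp, dotProduct_comm]
  rfl

lemma normSq_dotProduct_le {A : Type*} [Fintype A] (ψ φ : A → ℂ) :
    Complex.normSq (ψ ⬝ᵥ φ) ≤ (star ψ ⬝ᵥ ψ).re * (star φ ⬝ᵥ φ).re := by
  have h := pow_le_pow_left₀ (norm_nonneg _)
    (norm_inner_le_norm (𝕜 := ℂ) (WithLp.toLp 2 (star ψ)) (WithLp.toLp 2 φ)) 2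
  rwa [mul_pow, norm_toLp_sq, norm_toLp_sq, star_star, dotProduct_comm ψ (star ψ),
    EuclideanSpace.inner_toLp_toLp, star_star, dotProduct_comm, ← Complex.normSq_eq_norm_sq] at h

lemma SepState.exists_maxEntOverlap_eq {A : Type*} [Fintype A]
    {σ : Matrix (A × A) (A × A) ℂ} (hσ : SepState σ) :
    ∃ x : ℝ, 0 ≤ x ∧ x ≤ 1 ∧ maxEntOverlap A σ = x := by
  obtain ⟨n, p, ψ, φ, hp0, hp1, hψ, hφ, rfl⟩ := hσ
  refine ⟨∑ i, p i * Complex.normSq (ψ i ⬝ᵥ φ i), ?_, ?_, ?_⟩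
  · exact Finset.sum_nonneg fun i _ => mul_nonneg (hp0 i) (Complex.normSq_nonneg _)
  · calc ∑ i, p i * Complex.normSq (ψ i ⬝ᵥ φ i) ≤ ∑ i, p i :=
          Finset.sum_le_sum fun i _ =>
            mul_le_of_le_one_right (hp0 i)
              ((normSq_dotProduct_le _ _).trans (by simp [hψ i, hφ i]))
      _ = 1 := hp1
  · simp [map_sum, maxEntOverlap_kronecker_outer]

lemma sub_one_le_of_maxEnt_add_smul_eq {d : ℕ} {s : ℝ} (hs : 0 ≤ s)
    {σ σ' : Matrix (Fin d × Fin d) (Fin d × Fin d) ℂ} (hσ : SepState σ) (hσ' : SepState σ')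
    (h : maxEnt d + (s : ℂ) • σ = ((1 + s : ℝ) : ℂ) • σ') : (d : ℝ) - 1 ≤ s := by
  obtain ⟨x, hx0, -, hx⟩ := hσ.exists_maxEntOverlap_eq
  obtain ⟨y, -, hy1, hy⟩ := hσ'.exists_maxEntOverlap_eq
  have h' := congrArg (maxEntOverlap (Fin d)) h
  rw [map_add, map_smul, map_smul, maxEntOverlap_maxEnt, hx, hy, smul_eq_mul, smul_eq_mul]
    at h'
  have hreal : (d : ℝ) + s * x = (1 + s) * y := by exact_mod_cast h'
  nlinarith [mul_nonneg hs hx0]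

lemma sepState_sum {A B ι : Type*} [Fintype A] [Fintype B] (s : Finset ι) (p : ι → ℝ)
    (ψ : ι → A → ℂ) (φ : ι → B → ℂ) (hp0 : ∀ i ∈ s, 0 ≤ p i) (hp1 : ∑ i ∈ s, p i = 1)
    (hψ : ∀ i ∈ s, star (ψ i) ⬝ᵥ ψ i = 1) (hφ : ∀ i ∈ s, star (φ i) ⬝ᵥ φ i = 1) :
    SepState (∑ i ∈ s, (p i : ℂ) • (outer (ψ i) ⊗ₖ outer (φ i))) := by
  let e : Fin s.card ≃ s := s.equivFin.symm
  refine ⟨s.card, fun k => p (e k), fun k => ψ (e k), fun k => φ (e k),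
    fun k => hp0 _ (e k).2, ?_, fun k => hψ _ (e k).2, fun k => hφ _ (e k).2, ?_⟩
  · rw [← hp1, ← Finset.sum_coe_sort s]
    exact Equiv.sum_comp e fun i => p i
  · rw [← Finset.sum_coe_sort s]
    exact (Equiv.sum_comp e fun i => (p i : ℂ) • (outer (ψ i) ⊗ₖ outer (φ i))).symm

lemma ptraceB_diagonal {A B : Type*} [Fintype B] [DecidableEq A] [DecidableEq B]
    (f : A × B → ℂ) : ptraceB (diagonal f) = diagonal fun a => ∑ b, f (a, b) := by
  ext i j
  rcases eq_or_ne i j with rfl | hij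
  · simp [ptraceB]
  · simp [ptraceB, hij]

abbrev PhaseGroup (d : ℕ) := Fin d → ZMod 3

noncomputable def charVec (d : ℕ) (χ : AddChar (PhaseGroup d) ℂ) : Fin d → ℂ :=
  fun i => ((√d : ℝ) : ℂ)⁻¹ * χ (Pi.single i 1)

lemma ofReal_sqrt_natCast_mul_self (d : ℕ) : ((√d : ℝ) : ℂ) * ((√d : ℝ) : ℂ) = d := by
  rw [← Complex.ofReal_mul, Real.mul_self_sqrt d.cast_nonneg, Complex.ofReal_natCast]

lemma star_charVec_dotProduct {d : ℕ} (hd : d ≠ 0) (χ : AddChar (PhaseGroup d) ℂ) :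
    star (charVec d χ) ⬝ᵥ charVec d χ = 1 := by
  have hterm : ∀ i, star (charVec d χ i) * charVec d χ i = (d : ℂ)⁻¹ := fun i => by
    simp only [charVec, star_mul', RCLike.star_def, ← AddChar.map_neg_eq_conj, map_inv₀,
      Complex.conj_ofReal]
    rw [mul_mul_mul_comm, ← AddChar.map_add_eq_mul, neg_add_cancel, AddChar.map_zero_eq_one,
      mul_one, ← mul_inv, ofReal_sqrt_natCast_mul_self]
  simp only [dotProduct, Pi.star_apply, hterm, Finset.sum_const, Finset.card_univ,
    Fintype.card_fin, nsmul_eq_mul]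
  field_simp

lemma kronecker_outer_charVec_apply (d : ℕ) (χ : AddChar (PhaseGroup d) ℂ) (a b c e : Fin d) :
    (outer (charVec d χ) ⊗ₖ outer (star (charVec d χ))) (a, b) (c, e) =
      ((d : ℂ) ^ 2)⁻¹ * χ (Pi.single a 1 + Pi.single e 1 - (Pi.single b 1 + Pi.single c 1)) := by
  simp only [kronecker_apply, outer, vecMulVec_apply, charVec, Pi.star_apply, star_star,
    star_mul', RCLike.star_def, map_inv₀, Complex.conj_ofReal, ← AddChar.map_neg_eq_conj,
    sub_eq_add_neg, neg_add, AddChar.map_add_eq_mul]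
  rw [sq, ← ofReal_sqrt_natCast_mul_self]
  ring

noncomputable def randomPhaseState (d : ℕ) : Matrix (Fin d × Fin d) (Fin d × Fin d) ℂ :=
  ∑ χ : AddChar (PhaseGroup d) ℂ,
    ((((3 : ℝ) ^ d)⁻¹ : ℝ) : ℂ) • (outer (charVec d χ) ⊗ₖ outer (star (charVec d χ)))

lemma phaseGroup_single_add_single_eq_iff {d : ℕ} {a b c e : Fin d} :
    (Pi.single a 1 + Pi.single e 1 : PhaseGroup d) = Pi.single b 1 + Pi.single c 1 ↔
      (a = b ∧ c = e) ∨ (a = c ∧ b = e) := by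
  rw [Pi.single_add_single_eq_single_add_single one_ne_zero one_ne_zero]
  -- This excludes the third alternative `a = e ∧ b = c`, which would survive over `ZMod 2`.
  have h2 : (1 + 1 : ZMod 3) ≠ 0 := by decide
  grind

lemma randomPhaseState_apply (d : ℕ) (a b c e : Fin d) :
    randomPhaseState d (a, b) (c, e) =
      if (a = b ∧ c = e) ∨ (a = c ∧ b = e) then ((d : ℂ) ^ 2)⁻¹ else 0 := by
  simp only [randomPhaseState, Matrix.sum_apply, Matrix.smul_apply, smul_eq_mul,
    kronecker_outer_charVec_apply, ← Finset.mul_sum, AddChar.sum_apply_eq_ite, sub_eq_zero,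
    phaseGroup_single_add_single_eq_iff, Fintype.card_fun, ZMod.card, Fintype.card_fin]
  split_ifs
  · push_cast
    field_simp
  · simp

lemma sepState_randomPhaseState {d : ℕ} (hd : d ≠ 0) : SepState (randomPhaseState d) := by
  rw [randomPhaseState]
  refine sepState_sum _ (fun _ => ((3 : ℝ) ^ d)⁻¹) (charVec d) (fun χ => star (charVec d χ))
    (fun _ _ => by positivity) ?_ (fun χ _ => star_charVec_dotProduct hd χ) (fun χ _ => ?_)
  · simp [AddChar.card_eq]
  · rw [star_star, dotProduct_comm]
    exact star_charVec_dotProduct hd χ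

lemma ptraceB_randomPhaseState {d : ℕ} (hd : d ≠ 0) :
    ptraceB (randomPhaseState d) = (d : ℂ)⁻¹ • (1 : Matrix (Fin d) (Fin d) ℂ) := by
  ext a c
  rcases eq_or_ne a c with rfl | hac
  · simp [ptraceB, randomPhaseState_apply, sq, hd]
  · simp only [ptraceB, of_apply, randomPhaseState_apply, Matrix.smul_apply, one_apply_ne hac,
      smul_zero]
    refine Finset.sum_eq_zero fun k _ => if_neg ?_
    rintro (⟨rfl, rfl⟩ | ⟨rfl, -⟩) <;> exact hac rfl

noncomputable def offDiagState (d : ℕ) : Matrix (Fin d × Fin d) (Fin d × Fin d) ℂ :=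
  ∑ p ∈ Finset.univ.offDiag, ((((d : ℝ) * (d - 1))⁻¹ : ℝ) : ℂ) •
    (outer (Pi.single p.1 1) ⊗ₖ outer (Pi.single p.2 1))

lemma outer_single {A : Type*} [DecidableEq A] (i : A) :
    outer (Pi.single i 1) = single i i (1 : ℂ) := by
  rw [outer, Pi.star_single, star_one, single_eq_single_vecMulVec_single]

lemma offDiagState_eq_diagonal (d : ℕ) :
    offDiagState d = diagonal fun p => if p.1 = p.2 then 0 else ((d * (d - 1) : ℂ))⁻¹ := by
  ext p q
  simp only [offDiagState, outer_single, single_kronecker_single, mul_one, smul_single,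
    Matrix.sum_apply, single_apply, diagonal_apply]
  push_cast
  rcases eq_or_ne p q with rfl | hpq
  · simp [Finset.sum_ite_eq', Finset.mem_offDiag]
  · simp only [hpq, if_false]
    exact Finset.sum_eq_zero fun c _ => if_neg fun h => hpq (h.1.symm.trans h.2)

lemma sepState_offDiagState {d : ℕ} (hd : 2 ≤ d) : SepState (offDiagState d) := by
  have hd1 : (1 : ℝ) < d := by exact_mod_cast hd
  have hw : (0 : ℝ) ≤ ((d : ℝ) * (d - 1))⁻¹ := by
    have : (0 : ℝ) < d - 1 := by linarith
    positivity
  refine sepState_sum _ _ (fun p : Fin d × Fin d => Pi.single p.1 1)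
    (fun p => Pi.single p.2 1) (fun _ _ => hw) ?_ (fun _ _ => ?_) (fun _ _ => ?_)
  · rw [Finset.sum_const, Finset.offDiag_card, nsmul_eq_mul, Finset.card_univ, Fintype.card_fin,
      Nat.cast_sub (Nat.le_mul_self d), Nat.cast_mul]
    have : (d : ℝ) - 1 ≠ 0 := by linarith
    field_simp
  all_goals simp [Pi.star_single]

lemma ptraceB_offDiagState {d : ℕ} (hd : 2 ≤ d) :
    ptraceB (offDiagState d) = (d : ℂ)⁻¹ • (1 : Matrix (Fin d) (Fin d) ℂ) := by
  have hd1 : (d : ℂ) - 1 ≠ 0 := by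
    rw [sub_ne_zero]; exact_mod_cast (by omega : d ≠ 1)
  rw [offDiagState_eq_diagonal, ptraceB_diagonal, smul_one_eq_diagonal]
  congr 1
  funext a
  simp only [Finset.sum_ite, Finset.sum_const_zero, zero_add, Finset.sum_const, nsmul_eq_mul]
  rw [Finset.filter_ne, Finset.card_erase_of_mem (Finset.mem_univ a), Finset.card_univ,
    Fintype.card_fin, Nat.cast_pred (by omega)]
  field_simp

lemma maxEnt_add_smul_offDiagState (d : ℕ) :
    maxEnt d + ((d : ℂ) - 1) • offDiagState d = (d : ℂ) • randomPhaseState d := by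
  ext ⟨a, b⟩ ⟨c, e⟩
  simp only [maxEnt, offDiagState_eq_diagonal, randomPhaseState_apply, Matrix.add_apply,
    Matrix.smul_apply, of_apply, diagonal_apply, Prod.mk.injEq, smul_eq_mul]
  have hd : (d : ℂ) ≠ 0 := Nat.cast_ne_zero.2 (Fin.pos a).ne'
  by_cases hab : a = b
  · subst hab
    by_cases hce : c = e
    · simp [hce, sq, hd]
    · have : ¬(a = c ∧ a = e) := fun h => hce (h.1.symm.trans h.2)
      simp [hce, this]
  · have hd1 : (d : ℂ) - 1 ≠ 0 := by
      rw [sub_ne_zero, ← Nat.cast_one, Ne, Nat.cast_inj]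
      exact fun h => hab (Fin.ext (by omega))
    simp only [hab, false_and, false_or, if_false, zero_add]
    split_ifs
    · field_simp
    · simp

/-- The robustness of entanglement of the maximally entangled state on `C^d ⊗ C^d`,
with respect to separable states with maximally mixed marginal on the first factor,
is exactly `d - 1`: every feasible `s` satisfies `s ≥ d - 1`, and `s = d - 1` is
achievable. -/
theorem stmt8 (d : ℕ) (hd : 0 < d) :
    (∀ s : ℝ, 0 ≤ s → ∀ σ σ' : Matrix (Fin d × Fin d) (Fin d × Fin d) ℂ,
      SepState σ → SepState σ' →
      ptraceB σ = (d : ℂ)⁻¹ • (1 : Matrix (Fin d) (Fin d) ℂ) →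
      ptraceB σ' = (d : ℂ)⁻¹ • (1 : Matrix (Fin d) (Fin d) ℂ) →
      maxEnt d + ((s : ℝ) : ℂ) • σ = ((1 + s : ℝ) : ℂ) • σ' → (d : ℝ) - 1 ≤ s) ∧
    (∃ σ σ' : Matrix (Fin d × Fin d) (Fin d × Fin d) ℂ,
      SepState σ ∧ SepState σ' ∧
      ptraceB σ = (d : ℂ)⁻¹ • (1 : Matrix (Fin d) (Fin d) ℂ) ∧
      ptraceB σ' = (d : ℂ)⁻¹ • (1 : Matrix (Fin d) (Fin d) ℂ) ∧
      maxEnt d + ((d : ℂ) - 1) • σ = (d : ℂ) • σ') := by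
  refine ⟨fun s hs σ σ' hσ hσ' _ _ h => sub_one_le_of_maxEnt_add_smul_eq hs hσ hσ' h, ?_⟩
  have hsep := sepState_randomPhaseState hd.ne'
  have hpt := ptraceB_randomPhaseState hd.ne'
  obtain rfl | hd2 : d = 1 ∨ 2 ≤ d := by omega
  · refine ⟨_, _, hsep, hsep, hpt, hpt, ?_⟩
    simpa using maxEnt_add_smul_offDiagState 1
  · exact ⟨_, _, sepState_offDiagState hd2, hsep, ptraceB_offDiagState hd2, hpt,
      maxEnt_add_smul_offDiagState d⟩
end

section
/- Let N₁, N₂ be quantum channels and F a convex set of channels closed under tensor products (entanglement-breaking channels). If N_i = (1+s_i)M_i' − s_i M_i with M_i, M_i' ∈ F (i = 1,2), then there exist M, M' ∈ F such that N₁ ⊗ N₂ = (1+s)M' − sM where s = (1+s₁)(1+s₂) + s₁s₂ − 1 = 2s₁s₂ + s₁ + s₂. Consequently R(N₁⊗N₂) ≤ 2R(N₁)R(N₂) + R(N₁) + R(N₂). -/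
open scoped TensorProduct

/-- The robustness of `N` with respect to the free set `F`. -/
noncomputable def rob {V : Type*} [AddCommGroup V] [Module ℝ V] (F : Set V) (N : V) : ℝ :=
  sInf {s : ℝ | 0 ≤ s ∧ ∃ M ∈ F, (1 / (1 + s)) • N + (s / (1 + s)) • M ∈ F}

lemma rob_le_of_eq_smul_sub_smul {V : Type*} [AddCommGroup V] [Module ℝ V] {F : Set V}
    {N M M' : V} {s : ℝ} (hs : 0 ≤ s) (hM : M ∈ F) (hM' : M' ∈ F)
    (hN : N = (1 + s) • M' - s • M) : rob F N ≤ s := by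
  have h1s : (1 : ℝ) + s ≠ 0 := by positivity
  have hmix : (1 / (1 + s)) • N + (s / (1 + s)) • M = M' := by
    rw [hN]; match_scalars <;> field_simp; ring
  exact csInf_le ⟨0, fun _ hx => hx.1⟩ ⟨hs, M, hM, hmix ▸ hM'⟩

lemma Convex.exists_add_smul_eq {V : Type*} [AddCommGroup V] [Module ℝ V] {F : Set V}
    (hF : Convex ℝ F) {a b : ℝ} (ha : 0 ≤ a) (hb : 0 ≤ b) {x y : V} (hx : x ∈ F)
    (hy : y ∈ F) : ∃ z ∈ F, (a + b) • z = a • x + b • y := by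
  rw [← Set.mem_smul_set, hF.add_smul ha hb]
  exact Set.add_mem_add (Set.smul_mem_smul_set hx) (Set.smul_mem_smul_set hy)

lemma TensorProduct.smul_sub_smul_tmul_smul_sub_smul {R M N : Type*} [CommRing R]
    [AddCommGroup M] [Module R M] [AddCommGroup N] [Module R N]
    (a b c d : R) (x y : M) (z w : N) :
    (a • x - b • y) ⊗ₜ[R] (c • z - d • w) =
      ((a * c) • x ⊗ₜ[R] z + (b * d) • y ⊗ₜ[R] w)
        - ((b * c) • y ⊗ₜ[R] z + (a * d) • x ⊗ₜ[R] w) := by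
  simp only [sub_tmul, tmul_sub, ← smul_tmul', tmul_smul]
  module

/-- With `s = 2 s₁ s₂ + s₁ + s₂` one has `1 + s = (1 + s₁)(1 + s₂) + s₁ s₂` and
`s = s₁ (1 + s₂) + s₂ (1 + s₁)`, so both `M'` and `M` are convex mixtures of products of
free points, matching the expansion of `N₁ ⊗ N₂`. -/
lemma exists_tmul_eq_smul_sub_smul {V₁ V₂ : Type*} [AddCommGroup V₁] [Module ℝ V₁]
    [AddCommGroup V₂] [Module ℝ V₂] {F₁ : Set V₁} {F₂ : Set V₂} {F₁₂ : Set (V₁ ⊗[ℝ] V₂)}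
    (hconv : Convex ℝ F₁₂) (hten : ∀ M₁ ∈ F₁, ∀ M₂ ∈ F₂, M₁ ⊗ₜ[ℝ] M₂ ∈ F₁₂)
    {s₁ s₂ : ℝ} (hs₁ : 0 ≤ s₁) (hs₂ : 0 ≤ s₂)
    {M₁ M₁' : V₁} (hM₁ : M₁ ∈ F₁) (hM₁' : M₁' ∈ F₁)
    {M₂ M₂' : V₂} (hM₂ : M₂ ∈ F₂) (hM₂' : M₂' ∈ F₂) :
    ∃ M ∈ F₁₂, ∃ M' ∈ F₁₂,
      ((1 + s₁) • M₁' - s₁ • M₁) ⊗ₜ[ℝ] ((1 + s₂) • M₂' - s₂ • M₂) =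
        (1 + (2 * s₁ * s₂ + s₁ + s₂)) • M' - (2 * s₁ * s₂ + s₁ + s₂) • M := by
  obtain ⟨M, hM, hMeq⟩ := hconv.exists_add_smul_eq (by positivity : 0 ≤ s₁ * (1 + s₂))
    (by positivity : 0 ≤ (1 + s₁) * s₂) (hten _ hM₁ _ hM₂') (hten _ hM₁' _ hM₂)
  obtain ⟨M', hM', hM'eq⟩ := hconv.exists_add_smul_eq
    (by positivity : 0 ≤ (1 + s₁) * (1 + s₂)) (by positivity : 0 ≤ s₁ * s₂)
    (hten _ hM₁' _ hM₂') (hten _ hM₁ _ hM₂)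
  refine ⟨M, hM, M', hM', ?_⟩
  calc _ = ((1 + s₁) * (1 + s₂) + s₁ * s₂) • M' - (s₁ * (1 + s₂) + (1 + s₁) * s₂) • M := by
        rw [TensorProduct.smul_sub_smul_tmul_smul_sub_smul, hMeq, hM'eq]
    _ = _ := by congr 2 <;> ring

/-- Sub-multiplicativity-type bound for the robustness under tensor products: if
`N i = (1+s i)M i' - s i • M i` with `M i, M i' ∈ F i` optimal (`s i = rob (F i) (N i)`),
and the free set `F₁₂` of the joint system is convex and closed under tensor products,
then `N₁ ⊗ N₂ = (1+s)M' - sM` for some `M, M' ∈ F₁₂` with `s = 2s₁s₂ + s₁ + s₂`, and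
consequently `rob F₁₂ (N₁ ⊗ N₂) ≤ 2 R(N₁)R(N₂) + R(N₁) + R(N₂)`. -/
theorem stmt12 {V₁ V₂ : Type*} [AddCommGroup V₁] [Module ℝ V₁]
    [AddCommGroup V₂] [Module ℝ V₂]
    (F₁ : Set V₁) (F₂ : Set V₂) (F₁₂ : Set (V₁ ⊗[ℝ] V₂)) (hconv : Convex ℝ F₁₂)
    (hten : ∀ M₁ ∈ F₁, ∀ M₂ ∈ F₂, M₁ ⊗ₜ[ℝ] M₂ ∈ F₁₂)
    (N₁ : V₁) (N₂ : V₂) (s₁ s₂ : ℝ) (hs₁ : 0 ≤ s₁) (hs₂ : 0 ≤ s₂)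
    (M₁ M₁' : V₁) (hM₁ : M₁ ∈ F₁) (hM₁' : M₁' ∈ F₁)
    (M₂ M₂' : V₂) (hM₂ : M₂ ∈ F₂) (hM₂' : M₂' ∈ F₂)
    (h₁ : N₁ = (1 + s₁) • M₁' - s₁ • M₁)
    (h₂ : N₂ = (1 + s₂) • M₂' - s₂ • M₂)
    (hopt₁ : s₁ = rob F₁ N₁) (hopt₂ : s₂ = rob F₂ N₂) :
    (∃ M ∈ F₁₂, ∃ M' ∈ F₁₂,
      N₁ ⊗ₜ[ℝ] N₂ = (1 + (2 * s₁ * s₂ + s₁ + s₂)) • M' - (2 * s₁ * s₂ + s₁ + s₂) • M) ∧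
    rob F₁₂ (N₁ ⊗ₜ[ℝ] N₂)
      ≤ 2 * rob F₁ N₁ * rob F₂ N₂ + rob F₁ N₁ + rob F₂ N₂ := by
  have hdecomp := h₁ ▸ h₂ ▸
    exists_tmul_eq_smul_sub_smul hconv hten hs₁ hs₂ hM₁ hM₁' hM₂ hM₂'
  refine ⟨hdecomp, ?_⟩
  obtain ⟨M, hM, M', hM', hN⟩ := hdecomp
  rw [← hopt₁, ← hopt₂]
  exact rob_le_of_eq_smul_sub_smul (by positivity) hM hM' hN
end
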